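/- arXiv:1006.3786 — 4 statements merged into one kernel-verified Lean document; each statement's English description precedes it below -/
import Mathlib

section
/- For k-XOR-SAT with k even, the mapping Γ_l : M₁({−1,1}^l) → ℝ is convex for every l ≥ 1. Explicitly, Γ_l(ν) = Σ_{Q ⊆ [l], |Q| even} f_ν(Q)^k, where f_ν(Q) := E[Π_{r∈Q} Z^{(r)}] for (Z^{(1)},…,Z^{(l)}) ~ ν is linear in ν, so the sum of k-th powers with k even is convex. -/
open Filter
open scoped Classical Topology BigOperators

noncomputable section

/-- A clause type on `k` Boolean variables: a Boolean function `{-1,+1}^k → {0,1}`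
(we encode `{-1,+1}` by `Bool`, `true ↔ +1`, and `{0,1}` by `Bool`). -/
abbrev CT (k : ℕ) : Type := (Fin k → Bool) → Bool

/-- `μ` is a probability distribution on the finite type `ι`. -/
def IsPMF {ι : Type*} [Fintype ι] (μ : ι → ℝ) : Prop :=
  (∀ i, 0 ≤ μ i) ∧ ∑ i, μ i = 1

/-- A clause of a general CSP formula: `k` variable indices together with a clause type. -/
abbrev ClauseG (n k : ℕ) : Type := (Fin k → Fin n) × CT k

/-- An assignment satisfies a clause iff the clause type evaluates to `1` on the
values of the chosen variables. -/
def satC {n k : ℕ} (x : Fin n → Bool) (c : ClauseG n k) : Prop :=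
  c.2 (fun j => x (c.1 j)) = true

/-- The number of assignments satisfying all the clauses `f 0, …, f (m-1)`. -/
def ZC {n k m : ℕ} (f : Fin m → ClauseG n k) : ℕ :=
  (Finset.univ.filter fun x : Fin n → Bool => ∀ a : Fin m, satC x (f a)).card

/-- The probability of drawing the clauses `f 0, …, f (m-1)` when each clause has its `k`
indices i.i.d. uniform in `Fin n` and its clause type drawn from `μ`, independently. -/
def wG {n k m : ℕ} (μ : CT k → ℝ) (f : Fin m → ClauseG n k) : ℝ :=
  ∏ a : Fin m, ((1 : ℝ) / (n : ℝ) ^ k) * μ (f a).2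

/-- `P_n(α, φ, μ) = ℙ{Z(F(α,n,μ)) < 2^{nφ}}` for the ensemble with `⌊αn⌋` clauses. -/
def PnG (k n : ℕ) (α φ : ℝ) (μ : CT k → ℝ) : ℝ :=
  ∑ f : Fin ⌊α * (n : ℝ)⌋₊ → ClauseG n k,
    if (ZC f : ℝ) < (2 : ℝ) ^ ((n : ℝ) * φ) then wG μ f else 0

/-- `α*(μ) = sup{α : P_n(α,0,μ) = O(1/(log n)^{1+ε}) for some ε > 0}`. -/
def alphaStarG (k : ℕ) (μ : CT k → ℝ) : ℝ :=
  sSup {α : ℝ | ∃ ε : ℝ, 0 < ε ∧ ∃ C : ℝ,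
    ∀ᶠ (n : ℕ) in atTop, PnG k n α 0 μ ≤ C / Real.log n ^ (1 + ε)}

/-- `v_θ(x) = ∏ᵢ (1 + xᵢ θ)/2`, the biased product measure on `{-1,1}^k`. -/
def vtheta {k : ℕ} (θ : ℝ) (x : Fin k → Bool) : ℝ :=
  ∏ i : Fin k, (1 + (if x i then (1 : ℝ) else -1) * θ) / 2

/-- `‖φ‖_θ² = ∑_x φ(x)² v_θ(x)`, the `v_θ`-probability that the clause type is satisfied. -/
def normSq {k : ℕ} (φ : CT k) (θ : ℝ) : ℝ :=
  ∑ x : Fin k → Bool, (if φ x then (1 : ℝ) else 0) * vtheta θ x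

/-- Hypothesis H1: (a) dominance of balanced assignments, i.e. for all `θ ∈ [-1,1]`,
`E_φ log ‖φ‖_θ ≤ E_φ log ‖φ‖` with equality only at `θ = 0`; and (b) unsatisfiability of
uniform assignments: for each `s ∈ {-1,+1}` some clause type in the support of `μ`
vanishes at `(s,…,s)`. -/
def H1 (k : ℕ) (μ : CT k → ℝ) : Prop :=
  (∀ θ ∈ Set.Icc (-1 : ℝ) 1,
    (∑ φ : CT k, μ φ * Real.log (Real.sqrt (normSq φ θ))) ≤
        (∑ φ : CT k, μ φ * Real.log (Real.sqrt (normSq φ 0))) ∧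
      ((∑ φ : CT k, μ φ * Real.log (Real.sqrt (normSq φ θ))) =
          (∑ φ : CT k, μ φ * Real.log (Real.sqrt (normSq φ 0))) → θ = 0)) ∧
  (∀ s : Bool, ∃ φ : CT k, 0 < μ φ ∧ φ (fun _ => s) = false)

/-- `Γ_l(ν) = E_φ E ∏_{r=1}^l (1 - φ(Z^{(r)}))`, where `Z_i = (Z_i^{(1)},…,Z_i^{(l)})`,
`i = 1,…,k`, are i.i.d. with distribution `ν` on `{-1,1}^l` and `φ ~ μ`. -/
def Gam (k : ℕ) (μ : CT k → ℝ) (l : ℕ) (ν : (Fin l → Bool) → ℝ) : ℝ :=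
  ∑ φ : CT k, μ φ *
    ∑ z : Fin k → Fin l → Bool,
      (∏ i : Fin k, ν (z i)) * ∏ r : Fin l, (if φ (fun i => z i r) then (0 : ℝ) else 1)

/-- Hypothesis H2: `Γ_l` is convex on the simplex of probability measures on `{-1,1}^l`,
for every `l ≥ 1`. -/
def H2 (k : ℕ) (μ : CT k → ℝ) : Prop :=
  ∀ l : ℕ, 1 ≤ l → ConvexOn ℝ (stdSimplex ℝ (Fin l → Bool)) (Gam k μ l)

/-- The parity of an assignment `x ∈ {-1,1}^k` (encoding `true ↔ -1`):
`parity x = true` iff `∏ᵢ xᵢ = -1`. -/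
def parity {k : ℕ} (x : Fin k → Bool) : Bool :=
  decide (Odd (Finset.univ.filter fun i : Fin k => x i = true).card)

/-- The XOR clause type `φ_s(x) = 1(∏ᵢ xᵢ = s)`, with `s ∈ {-1,1}` encoded by `Bool`
(`true ↔ -1`). -/
def xorClause (k : ℕ) (s : Bool) : CT k := fun x => parity x == s

/-- The `k`-XOR-SAT clause type distribution: `μ(φ₁) = μ(φ₋₁) = 1/2`. -/
def muXor (k : ℕ) : CT k → ℝ := fun φ =>
  (if φ = xorClause k true then (1 : ℝ) / 2 else 0) +
    (if φ = xorClause k false then (1 : ℝ) / 2 else 0)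

/-! For `k` even, expanding each factor `1 - φ_s(Z^{(r)}) = (1 - s ∏ᵢ Zᵢ^{(r)})/2` and using
independence of the `Zᵢ`, averaging over `s = ±1` kills the odd sets `Q ⊆ [l]` and leaves
`Γ_l(ν) = 2^{-l} ∑_{|Q| even} f_ν(Q)^k`. Each `f_ν(Q)` is linear in `ν` and `x ↦ x^k` is
convex, so `Γ_l` is a nonnegative combination of convex functions. -/

theorem ConvexOn.finset_sum {𝕜 E β ι : Type*} [Semiring 𝕜] [PartialOrder 𝕜]
    [AddCommMonoid E] [AddCommMonoid β] [PartialOrder β] [IsOrderedAddMonoid β]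
    [SMul 𝕜 E] [Module 𝕜 β] {s : Set E} (hs : Convex 𝕜 s) (t : Finset ι) {f : ι → E → β}
    (hf : ∀ i ∈ t, ConvexOn 𝕜 s (f i)) : ConvexOn 𝕜 s fun x => ∑ i ∈ t, f i x := by
  classical
  induction t using Finset.induction_on with
  | empty => simpa using convexOn_const (0 : β) hs
  | insert a t ha ih =>
    simp only [Finset.sum_insert ha]
    exact (hf a (t.mem_insert_self a)).add (ih fun i hi => hf i (Finset.mem_insert_of_mem hi))

theorem Finset.prod_one_add_div_two {ι K : Type*} [Fintype ι] [Field K] (t : ι → K) :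
    ∏ i, (1 + t i) / 2 = (1 / 2) ^ Fintype.card ι * ∑ Q : Finset ι, ∏ i ∈ Q, t i := by
  rw [Finset.prod_div_distrib, Finset.prod_one_add, Finset.powerset_univ, Finset.prod_const,
    Finset.card_univ, div_eq_mul_inv, mul_comm, one_div, inv_pow]

/-- The sign `(-1)^b` of a Boolean, matching the encoding `true ↔ -1` of `parity`. -/
def boolSign (b : Bool) : ℝ := if b then -1 else 1

theorem prod_boolSign {k : ℕ} (x : Fin k → Bool) : ∏ i, boolSign (x i) = boolSign (parity x) := by
  simp only [boolSign, Finset.prod_ite, Finset.prod_const, one_pow, mul_one, parity]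
  rcases Nat.even_or_odd (Finset.univ.filter fun i : Fin k => x i = true).card with h | h
  · simp [h.neg_one_pow, Nat.not_odd_iff_even.mpr h]
  · simp [h.neg_one_pow, h]

theorem xorClause_unsat_indicator {k : ℕ} (s : Bool) (x : Fin k → Bool) :
    (if xorClause k s x then (0 : ℝ) else 1) = (1 + -boolSign s * ∏ i, boolSign (x i)) / 2 := by
  rw [prod_boolSign]
  cases s <;> cases h : parity x <;> norm_num [xorClause, boolSign, h]

def walsh {l : ℕ} (Q : Finset (Fin l)) (w : Fin l → Bool) : ℝ := ∏ r ∈ Q, boolSign (w r)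

/-- The Fourier coefficient `f_ν(Q) = E_ν ∏_{r ∈ Q} Z^{(r)}`. -/
def walshCoeff {l : ℕ} (Q : Finset (Fin l)) : ((Fin l → Bool) → ℝ) →ₗ[ℝ] ℝ :=
  Fintype.linearCombination ℝ (walsh Q)

theorem walshCoeff_apply {l : ℕ} (Q : Finset (Fin l)) (ν : (Fin l → Bool) → ℝ) :
    walshCoeff Q ν = ∑ w, ν w * walsh Q w := by
  simp [walshCoeff, Fintype.linearCombination_apply]

theorem prod_xorClause_unsat {k l : ℕ} (s : Bool) (z : Fin k → Fin l → Bool) :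
    ∏ r, (if xorClause k s (fun i => z i r) then (0 : ℝ) else 1) =
      (1 / 2) ^ l * ∑ Q : Finset (Fin l), (-boolSign s) ^ Q.card * ∏ i, walsh Q (z i) := by
  simp only [xorClause_unsat_indicator, Finset.prod_one_add_div_two, Fintype.card_fin]
  congr 1
  refine Finset.sum_congr rfl fun Q _ => ?_
  rw [Finset.prod_mul_distrib, Finset.prod_const, Finset.prod_comm]
  simp only [walsh]

theorem sum_prod_xorClause_unsat {k l : ℕ} (s : Bool) (ν : (Fin l → Bool) → ℝ) :
    ∑ z : Fin k → Fin l → Bool,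
        (∏ i, ν (z i)) * ∏ r, (if xorClause k s (fun i => z i r) then (0 : ℝ) else 1) =
      (1 / 2) ^ l * ∑ Q : Finset (Fin l), (-boolSign s) ^ Q.card * walshCoeff Q ν ^ k := by
  simp only [prod_xorClause_unsat, walshCoeff_apply, Fintype.sum_pow, Finset.mul_sum]
  rw [Finset.sum_comm]
  refine Finset.sum_congr rfl fun Q _ => Finset.sum_congr rfl fun z _ => ?_
  rw [Finset.prod_mul_distrib]
  ring

theorem Gam_muXor_eq (k l : ℕ) (ν : (Fin l → Bool) → ℝ) :
    Gam k (muXor k) l ν =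
      (1 / 2) ^ l * ∑ Q ∈ Finset.univ.filter (fun Q : Finset (Fin l) => Even Q.card),
        walshCoeff Q ν ^ k := by
  simp only [Gam, muXor, add_mul, ite_mul, zero_mul, Finset.sum_add_distrib,
    Finset.sum_ite_eq', Finset.mem_univ, if_true, sum_prod_xorClause_unsat, Finset.sum_filter]
  simp only [Finset.mul_sum, ← Finset.sum_add_distrib]
  refine Finset.sum_congr rfl fun Q _ => ?_
  simp only [boolSign, if_true, Bool.false_eq_true, if_false, neg_neg, one_pow]
  split_ifs with h
  · rw [h.neg_one_pow]; ring
  · rw [(Nat.not_even_iff_odd.mp h).neg_one_pow]; ring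

theorem xorSAT_Gamma_convex_general (k : ℕ) (hke : Even k) (l : ℕ) :
    ConvexOn ℝ (stdSimplex ℝ (Fin l → Bool)) (Gam k (muXor k) l) := by
  have hGam : Gam k (muXor k) l = fun ν => ((1 : ℝ) / 2) ^ l • ∑ Q ∈ Finset.univ.filter
      (fun Q : Finset (Fin l) => Even Q.card), walshCoeff Q ν ^ k :=
    funext (Gam_muXor_eq k l)
  rw [hGam]
  refine ConvexOn.smul (by positivity) <|
    ConvexOn.finset_sum (convex_stdSimplex ℝ _) _ fun Q _ => ?_
  exact (hke.convexOn_pow.comp_linearMap (walshCoeff Q)).subset (Set.subset_univ _)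
    (convex_stdSimplex ℝ _)

/-- **Convexity of `Γ_l` for `k`-XOR-SAT with `k` even:** the mapping `Γ_l` is convex on
the simplex of probability measures on `{-1,1}^l` for every `l ≥ 1` (hypothesis H2 holds
for `k`-XOR-SAT with `k` even). -/
theorem xorSAT_Gamma_convex (k : ℕ) (hk : 2 ≤ k) (hke : Even k) (l : ℕ) (hl : 1 ≤ l) :
    ConvexOn ℝ (stdSimplex ℝ (Fin l → Bool)) (Gam k (muXor k) l) :=
  xorSAT_Gamma_convex_general k hke l
end
end

section
/- Let f : ℕ → ℝ be positive with f(n)/n bounded above, let Δ(n) = O(n/(log n)^{1+ε}) for some ε > 0, and let t(n) = o(n). Suppose that f(n₁ + n₂) + Δ(n₁ + n₂) ≥ f(n₁) + f(n₂) for all n₁, n₂ ≥ t(n₁ + n₂). Then f(n)/n converges as n → ∞. -/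
/-!
Put `a n = f n / n` and `L = limsup a`. Eventually `t n ≤ n / 4`, and the defect is at most
`n g n` with `g n = K / (log n)^(1+ε)` antitone and `∑ g (2^i)` finite. Superadditivity at
`(n, n)` gives `a (2n) ≥ a n - g n`, and `∑ᵢ g (2^i m) → 0` as `m → ∞`, so one `m` with `a m`
close to `L` yields `f (2^k m) ≥ c 2^k m` for every `k`, with `c` just below `L`. Every large `n`
splits as `2^k m + b` with both parts at least `n / 4`; as `g` is antitone the defect `n g n` is
absorbed by the potential `4 ∑_{j<n} g j`, and induction on `n` gives
`c n ≤ f n + O(1) + 4 ∑_{j<n} g j`. The Cesàro means of `g` tend to `0`, so `liminf a ≥ c`.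
-/

open Filter Finset
open scoped Topology

lemma exists_two_pow_mul_mem_Icc {m s : ℕ} (hm : 0 < m) (hms : 4 * m ≤ s) :
    ∃ k, s ≤ 4 * (2 ^ k * m) ∧ 4 * (2 ^ k * m) ≤ 3 * s := by
  set k := Nat.log 2 (3 * s / (4 * m))
  have hpos : 1 ≤ 3 * s / (4 * m) := (Nat.le_div_iff_mul_le (by omega)).2 (by omega)
  have hlo : 2 ^ k * (4 * m) ≤ 3 * s :=
    (Nat.le_div_iff_mul_le (by omega)).1 (Nat.pow_log_le_self 2 (by omega))
  have hhi : 3 * s < 2 ^ (k + 1) * (4 * m) :=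
    (Nat.div_lt_iff_lt_mul (by omega)).1 (Nat.lt_pow_succ_log_self one_lt_two _)
  refine ⟨k, ?_, ?_⟩
  · rw [pow_succ] at hhi
    nlinarith
  · linarith

lemma Antitone.mul_le_four_mul_sum_Ico {g : ℕ → ℝ} (hg0 : ∀ n, 0 ≤ g n) (hg : Antitone g)
    {b s : ℕ} (hbs : 4 * b ≤ 3 * s) :
    s * g s ≤ 4 * ∑ j ∈ Ico b s, g j := by
  have hcard : (s : ℝ) ≤ 4 * (#(Ico b s) : ℕ) := by
    rw [Nat.card_Ico]
    exact_mod_cast (by omega : s ≤ 4 * (s - b))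
  calc (s : ℝ) * g s ≤ 4 * (#(Ico b s) • g s) := by
        rw [nsmul_eq_mul, ← mul_assoc]
        exact mul_le_mul_of_nonneg_right hcard (hg0 s)
    _ ≤ 4 * ∑ j ∈ Ico b s, g j := by
        gcongr
        exact card_nsmul_le_sum _ _ _ fun j hj => hg (mem_Ico.1 hj).2.le

lemma eventually_lt_div_of_le_add_sum {f g : ℕ → ℝ} (hg : Tendsto g atTop (𝓝 0))
    {c l C : ℝ} (hl : l < c) (hlow : ∀ s : ℕ, c * s ≤ f s + C + ∑ j ∈ range s, g j) :
    ∀ᶠ s : ℕ in atTop, l < f s / s := by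
  have herr : Tendsto (fun s : ℕ => C / s + (s : ℝ)⁻¹ * ∑ j ∈ range s, g j) atTop (𝓝 0) := by
    simpa using (tendsto_const_div_atTop_nhds_zero_nat C).add hg.cesaro
  filter_upwards [herr.eventually (gt_mem_nhds (sub_pos.2 hl)), eventually_gt_atTop 0]
    with s hs hs0
  have hs' : (0 : ℝ) < s := by exact_mod_cast hs0
  have hlow' : c - (C / s + (s : ℝ)⁻¹ * ∑ j ∈ range s, g j) ≤ f s / s := by
    rw [le_div_iff₀ hs']
    field_simp
    linarith [hlow s]
  linarith

lemma Antitone.tendsto_zero_of_summable_comp_two_pow {g : ℕ → ℝ} (hg0 : ∀ n, 0 ≤ g n)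
    (hg : Antitone g) (hsum : Summable fun i => g (2 ^ i)) : Tendsto g atTop (𝓝 0) := by
  have hinf := tendsto_atTop_ciInf hg ⟨0, by rintro _ ⟨n, rfl⟩; exact hg0 n⟩
  have hpow := hinf.comp (tendsto_pow_atTop_atTop_of_one_lt one_lt_two)
  rwa [tendsto_nhds_unique hpow hsum.tendsto_atTop_zero] at hinf

lemma Antitone.tendsto_tsum_comp_two_pow_mul {g : ℕ → ℝ} (hg0 : ∀ n, 0 ≤ g n)
    (hg : Antitone g) (hsum : Summable fun i => g (2 ^ i)) :
    Tendsto (fun m : ℕ => ∑' i, g (2 ^ i * m)) atTop (𝓝 0) := by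
  have hlim := hg.tendsto_zero_of_summable_comp_two_pow hg0 hsum
  simpa using tendsto_tsum_of_dominated_convergence (f := fun m i => g (2 ^ i * m))
    (g := fun _ => 0) hsum
    (fun i => hlim.comp (tendsto_atTop_mono (fun m => Nat.le_mul_of_pos_left m (by positivity))
      tendsto_id))
    ((eventually_ge_atTop 1).mono fun m hm i => by
      rw [Real.norm_of_nonneg (hg0 _)]
      exact hg (Nat.le_mul_of_pos_right _ hm))

def BalancedSuperadditive (f g : ℕ → ℝ) (N : ℕ) : Prop :=
  ∀ n₁ n₂ : ℕ, N ≤ n₁ + n₂ → n₁ + n₂ ≤ 4 * n₁ → n₁ + n₂ ≤ 4 * n₂ →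
    f n₁ + f n₂ ≤ f (n₁ + n₂) + (n₁ + n₂ : ℕ) * g (n₁ + n₂)

namespace BalancedSuperadditive

variable {f g : ℕ → ℝ} {N : ℕ}

lemma of_le {Δ t : ℕ → ℝ}
    (hsup : ∀ n₁ n₂ : ℕ, t (n₁ + n₂) ≤ (n₁ : ℝ) → t (n₁ + n₂) ≤ (n₂ : ℝ) →
      f n₁ + f n₂ ≤ f (n₁ + n₂) + Δ (n₁ + n₂))
    (hN : ∀ n ≥ N, Δ n ≤ n * g n ∧ 4 * t n ≤ n) : BalancedSuperadditive f g N := by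
  intro n₁ n₂ hn h₁ h₂
  obtain ⟨hΔ, ht⟩ := hN _ hn
  have h₁' : ((n₁ + n₂ : ℕ) : ℝ) ≤ 4 * n₁ := by exact_mod_cast h₁
  have h₂' : ((n₁ + n₂ : ℕ) : ℝ) ≤ 4 * n₂ := by exact_mod_cast h₂
  linarith [hsup n₁ n₂ (by linarith) (by linarith)]

lemma div_sub_le_div_two_mul (h : BalancedSuperadditive f g N) (hg : Antitone g)
    {a : ℕ} (ha : 0 < a) (hNa : N ≤ 2 * a) :
    f a / a - g a ≤ f (2 * a) / (2 * a : ℕ) := by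
  have hsup : f a + f a ≤ f (2 * a) + (2 * a : ℕ) * g (2 * a) := by
    simpa only [two_mul] using h a a (by omega) (by omega) (by omega)
  calc f a / a - g a ≤ f a / a - g (2 * a) := by linarith [hg (by omega : a ≤ 2 * a)]
    _ = (f a + f a - (2 * a : ℕ) * g (2 * a)) / (2 * a : ℕ) := by
      push_cast; field_simp; ring
    _ ≤ f (2 * a) / (2 * a : ℕ) := by gcongr; linarith

lemma div_sub_sum_le_div_pow_mul (h : BalancedSuperadditive f g N) (hg : Antitone g)
    {m : ℕ} (hm : 0 < m) (hNm : N ≤ 2 * m) (k : ℕ) :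
    f m / m - ∑ i ∈ range k, g (2 ^ i * m) ≤ f (2 ^ k * m) / (2 ^ k * m : ℕ) := by
  induction k with
  | zero => simp
  | succ k ih =>
    have hmk : m ≤ 2 ^ k * m := Nat.le_mul_of_pos_left m (by positivity)
    have step := h.div_sub_le_div_two_mul hg (a := 2 ^ k * m) (by positivity) (by omega)
    rw [sum_range_succ, show 2 ^ (k + 1) * m = 2 * (2 ^ k * m) by ring]
    linarith

lemma le_add_sum_of_le_pow_mul (h : BalancedSuperadditive f g N) (hf : ∀ n, 0 ≤ f n)
    (hg0 : ∀ n, 0 ≤ g n) (hg : Antitone g) {m B : ℕ} (hm : 0 < m) (hmB : 4 * m ≤ B)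
    (hNB : N ≤ B) {c : ℝ} (hc : 0 ≤ c) (hpow : ∀ k, c * (2 ^ k * m : ℕ) ≤ f (2 ^ k * m)) (s : ℕ) :
    c * s ≤ f s + c * B + 4 * ∑ j ∈ range s, g j := by
  induction s using Nat.strong_induction_on with | _ s ih =>
  have hsum_nonneg : 0 ≤ ∑ j ∈ range s, g j := sum_nonneg fun j _ => hg0 j
  rcases lt_or_ge s B with hsB | hBs
  · have : c * s ≤ c * B := by gcongr
    linarith [hf s]
  obtain ⟨k, hk₁, hk₂⟩ := exists_two_pow_mul_mem_Icc hm (hmB.trans hBs)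
  have hp : 0 < 2 ^ k * m := by positivity
  set p := 2 ^ k * m
  obtain ⟨b, rfl⟩ : ∃ b, s = p + b := ⟨s - p, by omega⟩
  have hsup := h p b (by omega) (by omega) (by omega)
  have hgap := hg.mul_le_four_mul_sum_Ico hg0 (b := b) (s := p + b) (by omega)
  have hsplit := sum_range_add_sum_Ico g (by omega : b ≤ p + b)
  have ihb := ih b (by omega)
  have hpk : c * p ≤ f p := hpow k
  rw [Nat.cast_add] at hsup hgap ⊢
  linarith

lemma eventually_lt_div_of_frequently_lt (h : BalancedSuperadditive f g N)
    (hf : ∀ n, 0 ≤ f n) (hg0 : ∀ n, 0 ≤ g n) (hg : Antitone g)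
    (hsum : Summable fun i => g (2 ^ i)) {l l' : ℝ} (hl : l < l')
    (hfreq : ∃ᶠ n in atTop, l' < f n / n) : ∀ᶠ n in atTop, l < f n / n := by
  rcases lt_or_ge l 0 with hl0 | hl0
  · exact Eventually.of_forall fun n => hl0.trans_le (div_nonneg (hf n) n.cast_nonneg)
  obtain ⟨M, hM⟩ := eventually_atTop.1 <| (hg.tendsto_tsum_comp_two_pow_mul hg0 hsum).eventually
    (gt_mem_nhds (show 0 < (l' - l) / 2 by linarith))
  obtain ⟨m, hlm, hm⟩ := (hfreq.and_eventually (eventually_ge_atTop (max M (max N 1)))).exists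
  have hm0 : 0 < m := by omega
  have hpow : ∀ k, (l + l') / 2 * (2 ^ k * m : ℕ) ≤ f (2 ^ k * m) := by
    intro k
    have hsummable : Summable fun i => g (2 ^ i * m) :=
      hsum.of_nonneg_of_le (fun i => hg0 _) fun i => hg (Nat.le_mul_of_pos_right _ hm0)
    have htail := hsummable.sum_le_tsum (range k) fun i _ => hg0 (2 ^ i * m)
    have hdouble := h.div_sub_sum_le_div_pow_mul hg hm0 (by omega) k
    rw [← le_div_iff₀ (by positivity)]
    linarith [hM m (by omega)]
  have hlow := h.le_add_sum_of_le_pow_mul hf hg0 hg hm0 (le_max_right N (4 * m))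
    (le_max_left N (4 * m)) (by linarith) hpow
  simp only [mul_sum] at hlow
  exact eventually_lt_div_of_le_add_sum
    (by simpa using (hg.tendsto_zero_of_summable_comp_two_pow hg0 hsum).const_mul 4)
    (by linarith) hlow

theorem tendsto_div_limsup (h : BalancedSuperadditive f g N) (hf : ∀ n, 0 ≤ f n)
    (hbdd : IsBoundedUnder (· ≤ ·) atTop fun n => f n / n) (hg0 : ∀ n, 0 ≤ g n)
    (hg : Antitone g) (hsum : Summable fun i => g (2 ^ i)) :
    Tendsto (fun n => f n / n) atTop (𝓝 (limsup (fun n => f n / n) atTop)) := by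
  have hcobdd : IsCoboundedUnder (· ≤ ·) atTop fun n => f n / n :=
    (isBoundedUnder_of_eventually_ge
      (Eventually.of_forall fun n => div_nonneg (hf n) n.cast_nonneg)).isCoboundedUnder_le
  refine tendsto_order.2 ⟨fun l hl => ?_, fun u hu => eventually_lt_of_limsup_lt hu hbdd⟩
  obtain ⟨l', hll', hl'⟩ := exists_between hl
  exact h.eventually_lt_div_of_frequently_lt hf hg0 hg hsum hll'
    (frequently_lt_of_lt_limsup hcobdd hl')

end BalancedSuperadditive

lemma antitone_div_log_max_rpow {K p : ℝ} (hK : 0 ≤ K) (hp : 0 ≤ p) :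
    Antitone fun j : ℕ => K / Real.log (max j 2) ^ p := by
  intro i j hij
  have hlog : 0 < Real.log (max (i : ℝ) 2) := Real.log_pos (by simp)
  dsimp only
  gcongr

lemma summable_div_log_max_two_pow_rpow (K : ℝ) {p : ℝ} (hp : 1 < p) :
    Summable fun i : ℕ => K / Real.log (max ((2 ^ i : ℕ) : ℝ) 2) ^ p := by
  rw [← summable_nat_add_iff 1]
  refine (((Real.summable_nat_rpow_inv.2 hp).comp_injective (add_left_injective 1)).mul_left
    (K / Real.log 2 ^ p)).congr fun i => ?_
  have h2 : (2 : ℝ) ≤ 2 ^ (i + 1) := le_self_pow₀ one_le_two i.succ_ne_zero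
  simp only [Function.comp_apply, Nat.cast_pow, Nat.cast_ofNat, max_eq_left h2, Real.log_pow]
  rw [Real.mul_rpow (by positivity) (Real.log_nonneg one_le_two)]
  push_cast
  field_simp

/-- **A pseudo-superadditivity convergence lemma.**
Let `f : ℕ → ℝ` be positive with `f n / n` bounded above, let `Δ(n) = O(n/(log n)^{1+ε})`
for some `ε > 0`, and let `t(n) = o(n)`.  If
`f(n₁) + f(n₂) ≤ f(n₁ + n₂) + Δ(n₁ + n₂)` whenever `n₁, n₂ ≥ t(n₁ + n₂)`,
then `f n / n` converges as `n → ∞`. -/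
theorem pseudo_superadditive_converges (f Δ t : ℕ → ℝ)
    (hf : ∀ n : ℕ, 0 < f n)
    (hbd : ∃ M : ℝ, ∀ n : ℕ, 1 ≤ n → f n ≤ M * n)
    (hΔ : ∃ ε : ℝ, 0 < ε ∧ ∃ K : ℝ,
      ∀ᶠ (n : ℕ) in atTop, |Δ n| ≤ K * n / Real.log n ^ (1 + ε))
    (ht : Tendsto (fun n : ℕ => t n / n) atTop (𝓝 0))
    (hsup : ∀ n₁ n₂ : ℕ, t (n₁ + n₂) ≤ (n₁ : ℝ) → t (n₁ + n₂) ≤ (n₂ : ℝ) →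
      f n₁ + f n₂ ≤ f (n₁ + n₂) + Δ (n₁ + n₂)) :
    ∃ L : ℝ, Tendsto (fun n : ℕ => f n / n) atTop (𝓝 L) := by
  obtain ⟨M, hM⟩ := hbd
  obtain ⟨ε, hε, K, hK⟩ := hΔ
  -- `max j 2` keeps the logarithm away from `0`, so that `g` is antitone on all of `ℕ`.
  set g : ℕ → ℝ := fun j => max K 0 / Real.log (max j 2) ^ (1 + ε)
  have hΔg : ∀ᶠ n : ℕ in atTop, Δ n ≤ n * g n := by
    filter_upwards [hK, eventually_ge_atTop 2] with n hn hn2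
    simp only [g]
    rw [max_eq_left (by exact_mod_cast hn2 : (2 : ℝ) ≤ n), ← mul_div_assoc, mul_comm (n : ℝ)]
    exact (le_abs_self _).trans (hn.trans (by gcongr; exact le_max_left K 0))
  have ht4 : ∀ᶠ n : ℕ in atTop, 4 * t n ≤ n := by
    filter_upwards [ht.eventually (gt_mem_nhds (by norm_num : (0 : ℝ) < 1 / 4)),
      eventually_gt_atTop 0] with n hn hn0
    rw [div_lt_iff₀ (by positivity)] at hn
    linarith
  obtain ⟨N, hN⟩ := (hΔg.and ht4).exists_forall_of_atTop
  have hbdd : IsBoundedUnder (· ≤ ·) atTop fun n => f n / n :=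
    isBoundedUnder_of_eventually_le <| (eventually_ge_atTop 1).mono fun n hn =>
      (div_le_iff₀ (by positivity)).2 (hM n hn)
  exact ⟨_, (BalancedSuperadditive.of_le hsup hN).tendsto_div_limsup (fun n => (hf n).le) hbdd
    (fun j => div_nonneg (le_max_right K 0)
      (Real.rpow_nonneg (Real.log_nonneg (le_max_of_le_right one_le_two)) _))
    (antitone_div_log_max_rpow (le_max_right K 0) (by linarith))
    (summable_div_log_max_two_pow_rpow _ (by linarith))⟩
end

section
/- Fix k ≥ 2 and α > 0. Let F_m denote a random formula consisting of exactly m clauses drawn independently and uniformly at random from C_k(n). Then for every a ≥ 0 and every integer l ≥ 1, P{ Z(F_{⌊αn⌋}) < 2^{a+1} } − P{ Z(F_{⌊αn⌋+l}) < 2^{a} } ≤ 2·(1 − 2^{-k})^l. -/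
open Filter
open scoped Classical Topology BigOperators

noncomputable section

/-- A `j`-clause on `n` Boolean variables: a set of `j` literals (variable–sign pairs)
over `j` distinct variables.  There are `C(n,j) * 2^j` such clauses. -/
def Clause (n j : ℕ) : Type :=
  {L : Finset (Fin n × Bool) // L.card = j ∧ (L.image Prod.fst).card = j}

instance (n j : ℕ) : Fintype (Clause n j) := Subtype.fintype _

/-- A truth assignment satisfies a clause iff some literal of the clause evaluates to true. -/
def sat {n j : ℕ} (x : Fin n → Bool) (c : Clause n j) : Prop :=
  ∃ l ∈ c.1, x l.1 = l.2

/-- The number of assignments satisfying all of the `m` clauses `f 0, …, f (m-1)`. -/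
def Zt {n j m : ℕ} (f : Fin m → Clause n j) : ℕ :=
  (Finset.univ.filter fun x : Fin n → Bool => ∀ a : Fin m, sat x (f a)).card

/-- `ℙ{Z(F_m) < y}` where `F_m` consists of `m` clauses drawn independently and uniformly
at random from `C_k(n)`. -/
def PmUnif (k n m : ℕ) (y : ℝ) : ℝ :=
  (∑ f : Fin m → Clause n k, if (Zt f : ℝ) < y then (1 : ℝ) else 0) /
    (Fintype.card (Clause n k) : ℝ) ^ m

/-! Fix the first `m` clauses `g`. Among the `2 ^ k` clauses on any `k` variables an assignment
falsifies exactly one, so it satisfies at most a `1 - 2⁻ᵏ` fraction of all clauses, and adding `l`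
independent clauses multiplies the expected number of solutions by at most `(1 - 2⁻ᵏ) ^ l`.
If `Z(g) < 2 ^ (a + 1)`, Markov's inequality then bounds the conditional probability of
`Z(F_{m+l}) ≥ 2 ^ a` by `2 (1 - 2⁻ᵏ) ^ l`; averaging over `g` gives the theorem. -/

open Finset

namespace Clause

variable {n k : ℕ}

def support (c : Clause n k) : Finset (Fin n) := c.1.image Prod.fst

lemma card_support (c : Clause n k) : #c.support = k := c.2.2

lemma snd_eq_of_mem (c : Clause n k) {v : Fin n} {b b' : Bool}
    (h : (v, b) ∈ c.1) (h' : (v, b') ∈ c.1) : b = b' := by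
  have hinj : Set.InjOn Prod.fst (c.1 : Set (Fin n × Bool)) := by
    rw [← card_image_iff, c.2.1, c.2.2]
  exact congrArg Prod.snd (hinj h h' rfl)

lemma mem_iff (c : Clause n k) (v : Fin n) (b : Bool) :
    (v, b) ∈ c.1 ↔ v ∈ c.support ∧ ((v, true) ∈ c.1 ↔ b = true) := by
  refine ⟨fun h => ⟨mem_image_of_mem _ h, fun ht => (c.snd_eq_of_mem ht h).symm,
    by rintro rfl; exact h⟩, fun ⟨hv, hb⟩ => ?_⟩
  obtain ⟨⟨v, b'⟩, hm, rfl⟩ := mem_image.mp hv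
  cases b' <;> cases b
  · exact hm
  · exact hb.mpr rfl
  · exact absurd (hb.mp hm) (by simp)
  · exact hm

lemma ext_of_support_eq {c d : Clause n k} (hsupp : c.support = d.support)
    (hsign : ∀ v ∈ c.support, (v, true) ∈ c.1 ↔ (v, true) ∈ d.1) : c = d := by
  refine Subtype.ext (Finset.ext fun ⟨v, b⟩ => ?_)
  rw [c.mem_iff, d.mem_iff, ← hsupp]
  exact and_congr_right fun hv => by rw [hsign v hv]

lemma card_support_eq_le (S : Finset (Fin n)) : #{c : Clause n k | c.support = S} ≤ 2 ^ #S := by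
  let sign : Clause n k → S → Bool := fun c v => decide ((v.1, true) ∈ c.1)
  have hinj : Set.InjOn sign ({c : Clause n k | c.support = S} : Finset _) := by
    intro c hc d hd hcd
    rw [mem_coe, mem_filter] at hc hd
    refine ext_of_support_eq (hc.2.trans hd.2.symm) fun v hv => ?_
    simpa [sign] using congrFun hcd ⟨v, hc.2 ▸ hv⟩
  simpa using card_le_card_of_injOn sign (fun _ _ => mem_univ _) hinj

def ofSupport (S : Finset (Fin n)) (hS : #S = k) (σ : Fin n → Bool) : Clause n k :=
  ⟨S.image fun v => (v, σ v),
    by rw [card_image_of_injective _ fun v w h => congrArg Prod.fst h, hS],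
    by simpa [image_image, Function.comp_def] using hS⟩

lemma support_ofSupport (S : Finset (Fin n)) (hS : #S = k) (σ : Fin n → Bool) :
    (ofSupport S hS σ).support = S := by
  simp [support, ofSupport, image_image, Function.comp_def]

lemma not_sat_ofSupport_not (x : Fin n → Bool) (S : Finset (Fin n)) (hS : #S = k) :
    ¬ sat x (ofSupport S hS fun v => !x v) := by
  simp [sat, ofSupport]

lemma card_pos (hkn : k ≤ n) : 0 < Fintype.card (Clause n k) := by
  obtain ⟨S, -, hS⟩ := exists_subset_card_eq (s := (univ : Finset (Fin n))) (by simpa using hkn)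
  exact Fintype.card_pos_iff.mpr ⟨ofSupport S hS fun _ => true⟩

lemma card_le_two_pow_mul_card_not_sat (x : Fin n → Bool) :
    Fintype.card (Clause n k) ≤ 2 ^ k * #{c : Clause n k | ¬ sat x c} := by
  refine card_le_mul_card_image_of_maps_to
    (f := fun c : Clause n k => ofSupport c.support c.card_support fun v => !x v) (s := univ)
    (fun c _ => by simpa using not_sat_ofSupport_not x _ _) _ fun d _ => ?_
  calc #{c | ofSupport c.support c.card_support (fun v => !x v) = d}
      ≤ #{c : Clause n k | c.support = d.support} := card_le_card fun c hc => by
        rw [mem_filter] at hc ⊢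
        exact ⟨hc.1, by rw [← hc.2, support_ofSupport]⟩
    _ ≤ 2 ^ k := (card_support_eq_le _).trans_eq (by rw [d.card_support])

lemma card_sat_le (x : Fin n → Bool) :
    (#{c : Clause n k | sat x c} : ℝ) ≤ (1 - 2⁻¹ ^ k) * Fintype.card (Clause n k) := by
  have hsplit : (#{c : Clause n k | sat x c} : ℝ) + #{c : Clause n k | ¬ sat x c} =
      Fintype.card (Clause n k) := by
    exact_mod_cast card_filter_add_card_filter_not (s := univ) (sat x)
  have hnot : (2 : ℝ)⁻¹ ^ k * Fintype.card (Clause n k) ≤ #{c : Clause n k | ¬ sat x c} := by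
    rw [inv_pow, inv_mul_le_iff₀ (by positivity)]
    exact_mod_cast card_le_two_pow_mul_card_not_sat x
  linarith

end Clause

lemma sum_card_filter_forall_pi {α C : Type*} [Fintype C] (s : Finset α) (P : α → C → Prop)
    (l : ℕ) : ∑ h : Fin l → C, #{x ∈ s | ∀ i, P x (h i)} = ∑ x ∈ s, #{c | P x c} ^ l := by
  simp_rw [card_filter, Fintype.sum_pow, Fintype.prod_boole]
  exact sum_comm.trans (by congr!)

lemma card_filter_mul_le_sum {ι : Type*} (s : Finset ι) (f : ι → ℝ) (hf : ∀ i ∈ s, 0 ≤ f i)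
    (y : ℝ) : #{i ∈ s | y ≤ f i} * y ≤ ∑ i ∈ s, f i := by
  calc #{i ∈ s | y ≤ f i} * y = ∑ i ∈ s with y ≤ f i, y := by rw [sum_const, nsmul_eq_mul]
    _ ≤ ∑ i ∈ s with y ≤ f i, f i := sum_le_sum fun i hi => (mem_filter.mp hi).2
    _ ≤ ∑ i ∈ s, f i := sum_le_sum_of_subset_of_nonneg (filter_subset _ _) fun i hi _ => hf i hi

variable {n k m : ℕ}

lemma Zt_append {l : ℕ} (g : Fin m → Clause n k) (h : Fin l → Clause n k) :
    Zt (Fin.append g h) = #{x ∈ {x | ∀ a, sat x (g a)} | ∀ b, sat x (h b)} := by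
  rw [Zt, filter_filter]
  simp [Fin.forall_fin_add]

lemma sum_Zt_append_le (g : Fin m → Clause n k) (l : ℕ) :
    ∑ h : Fin l → Clause n k, (Zt (Fin.append g h) : ℝ) ≤
      Zt g * ((1 - 2⁻¹ ^ k) * Fintype.card (Clause n k)) ^ l := by
  simp_rw [Zt_append]
  rw [← Nat.cast_sum, sum_card_filter_forall_pi, Nat.cast_sum, Zt, ← nsmul_eq_mul]
  exact sum_le_card_nsmul _ _ _ fun x _ => by
    push_cast
    exact pow_le_pow_left₀ (by positivity) (Clause.card_sat_le x) l

/-- `ℙ{Z(F_{m+l}) < y}` conditioned on the first `m` clauses of `F_{m+l}` being `g`. -/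
def PmUnifGiven (g : Fin m → Clause n k) (l : ℕ) (y : ℝ) : ℝ :=
  (∑ h : Fin l → Clause n k, if (Zt (Fin.append g h) : ℝ) < y then (1 : ℝ) else 0) /
    (Fintype.card (Clause n k) : ℝ) ^ l

lemma PmUnif_add (m l : ℕ) (y : ℝ) :
    PmUnif k n (m + l) y =
      (∑ g : Fin m → Clause n k, PmUnifGiven g l y) / (Fintype.card (Clause n k) : ℝ) ^ m := by
  simp_rw [PmUnif, PmUnifGiven, ← (Fin.appendEquiv m l).sum_comp, Fintype.sum_prod_type]
  rw [← sum_div, div_div, ← pow_add, add_comm l]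
  rfl

lemma PmUnifGiven_nonneg (g : Fin m → Clause n k) (l : ℕ) (y : ℝ) : 0 ≤ PmUnifGiven g l y := by
  unfold PmUnifGiven
  positivity

lemma one_sub_inv_two_pow_nonneg (k : ℕ) : (0 : ℝ) ≤ 1 - 2⁻¹ ^ k :=
  sub_nonneg.mpr (pow_le_one₀ (by norm_num) (by norm_num))

lemma one_sub_le_PmUnifGiven (hkn : k ≤ n) (g : Fin m → Clause n k) (l : ℕ) {y : ℝ}
    (hy : 0 < y) (hg : (Zt g : ℝ) < 2 * y) : 1 - 2 * (1 - 2⁻¹ ^ k) ^ l ≤ PmUnifGiven g l y := by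
  have hN : (0 : ℝ) < Fintype.card (Clause n k) := by exact_mod_cast Clause.card_pos hkn
  set N : ℝ := (Fintype.card (Clause n k) : ℝ)
  set p : ℝ := 1 - 2⁻¹ ^ k
  have hp : 0 ≤ p := one_sub_inv_two_pow_nonneg k
  have hbad : (#{h : Fin l → Clause n k | y ≤ (Zt (Fin.append g h) : ℝ)} : ℝ) ≤
      2 * p ^ l * N ^ l := by
    have := (card_filter_mul_le_sum _ _ (fun _ _ => by positivity) y).trans <|
      (sum_Zt_append_le g l).trans (mul_le_mul_of_nonneg_right hg.le (by positivity))
    rw [mul_right_comm, mul_pow, ← mul_assoc] at this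
    exact le_of_mul_le_mul_right this hy
  have hlt : ∀ h : Fin l → Clause n k, (if (Zt (Fin.append g h) : ℝ) < y then (1 : ℝ) else 0) =
      1 - if y ≤ (Zt (Fin.append g h) : ℝ) then 1 else 0 := fun h => by
    split_ifs <;> linarith
  rw [PmUnifGiven, le_div_iff₀ (pow_pos hN l)]
  simp only [hlt, sum_sub_distrib, sum_const, card_univ, Fintype.card_fun, Fintype.card_fin,
    nsmul_eq_mul, mul_one, Nat.cast_pow, sum_boole]
  linarith

lemma indicator_sub_PmUnifGiven_le (hkn : k ≤ n) (g : Fin m → Clause n k) (l : ℕ) {y : ℝ}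
    (hy : 0 < y) :
    (if (Zt g : ℝ) < 2 * y then (1 : ℝ) else 0) - PmUnifGiven g l y ≤ 2 * (1 - 2⁻¹ ^ k) ^ l := by
  split_ifs with hg
  · linarith [one_sub_le_PmUnifGiven hkn g l hy hg]
  · linarith [PmUnifGiven_nonneg g l y, pow_nonneg (one_sub_inv_two_pow_nonneg k) l]

theorem add_clauses_bound_general (k n : ℕ) (hkn : k ≤ n) (α : ℝ)
    (a : ℝ) (l : ℕ) :
    PmUnif k n ⌊α * (n : ℝ)⌋₊ ((2 : ℝ) ^ (a + 1)) -
        PmUnif k n (⌊α * (n : ℝ)⌋₊ + l) ((2 : ℝ) ^ a) ≤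
      2 * (1 - (2 : ℝ)⁻¹ ^ k) ^ l := by
  have hN : (0 : ℝ) < Fintype.card (Clause n k) := by exact_mod_cast Clause.card_pos hkn
  rw [PmUnif_add, PmUnif, Real.rpow_add_one two_ne_zero, mul_comm _ (2 : ℝ), ← sub_div,
    ← sum_sub_distrib, div_le_iff₀ (by positivity)]
  calc _ ≤ ∑ _g : Fin ⌊α * (n : ℝ)⌋₊ → Clause n k, 2 * (1 - (2 : ℝ)⁻¹ ^ k) ^ l :=
        sum_le_sum fun g _ => indicator_sub_PmUnifGiven_le hkn g l (by positivity)
    _ = _ := by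
        rw [sum_const, card_univ, Fintype.card_fun, Fintype.card_fin, nsmul_eq_mul, Nat.cast_pow,
          mul_comm]

/-- **Adding `l` uniform clauses decreases the number of solutions geometrically:**
for the uniform model with exactly `m` clauses,
`ℙ{Z(F_{⌊αn⌋}) < 2^{a+1}} - ℙ{Z(F_{⌊αn⌋+l}) < 2^a} ≤ 2 (1 - 2^{-k})^l`. -/
theorem add_clauses_bound (k n : ℕ) (hk : 2 ≤ k) (hkn : k ≤ n) (α : ℝ) (hα : 0 < α)
    (a : ℝ) (ha : 0 ≤ a) (l : ℕ) (hl : 1 ≤ l) :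
    PmUnif k n ⌊α * (n : ℝ)⌋₊ ((2 : ℝ) ^ (a + 1)) -
        PmUnif k n (⌊α * (n : ℝ)⌋₊ + l) ((2 : ℝ) ^ a) ≤
      2 * (1 - (2 : ℝ)⁻¹ ^ k) ^ l :=
  add_clauses_bound_general k n hkn α a l
end
end

section
/- Let f be a Boolean formula on n variables, let C_i^{(1)} denote 1-clauses (single literals) drawn independently and uniformly from C_1(n), and C_i^{(k)} denote k-clauses drawn independently and uniformly from C_k(n). Fix an integer D ≥ 1 and y ∈ ℝ. Then for any unbounded increasing sequence h(n) and any ε > 0, for all n large enough: P{ Z(f ∧ C_1^{(1)} ∧ … ∧ C_D^{(1)}) < y } ≤ P{ Z(f ∧ C_1^{(k)} ∧ … ∧ C_{h(n)}^{(k)}) < k^D·y } + ε. -/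
open Filter
open scoped Classical Topology BigOperators

noncomputable section

/-- The number of assignments satisfying the (arbitrary) Boolean formula `f` together with
all of the `m` appended `j`-clauses. -/
def Zf {n j m : ℕ} (f : (Fin n → Bool) → Bool) (c : Fin m → Clause n j) : ℕ :=
  (Finset.univ.filter fun x : Fin n → Bool =>
    f x = true ∧ ∀ a : Fin m, sat x (c a)).card

/-- `ℙ{Z(f ∧ C₁ ∧ … ∧ C_m) < y}` where `C₁, …, C_m` are `j`-clauses drawn independently
and uniformly at random from `C_j(n)`. -/
def Pf (n j m : ℕ) (f : (Fin n → Bool) → Bool) (y : ℝ) : ℝ :=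
  (∑ c : Fin m → Clause n j, if (Zf f c : ℝ) < y then (1 : ℝ) else 0) /
    (Fintype.card (Clause n j) : ℝ) ^ m

/-!
Let `T` be the set of `D`-tuples `u` of unit clauses with `Z(f ∧ u) < y`. Choosing one literal
in each clause of a `D`-tuple `d` of `k`-clauses gives `k ^ D` tuples of unit clauses, and every
solution of `f ∧ d` solves one of them, so `Z(f ∧ d) < k ^ D y` as soon as all of them lie in `T`.
A uniform `d` has this property with probability at least `β^[D] ℙ(T)`: `β` bounds it for
`D = 1`, and the bound tensorizes over the coordinates because `β` is monotone and convex
(Jensen). If `ℙ(T) > ε`, this is at least some `δ > 0` independent of `n`. Among `h(n)` uniform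
`k`-clauses there are `s` disjoint, independent blocks of `D` clauses, with `(1 - δ) ^ s < ε`, so
`Z(f ∧ C⁽ᵏ⁾) < k ^ D y` fails with probability less than `ε`.
-/

open Finset

lemma Nat.choose_mul_pow_sub_le (n t k : ℕ) :
    n.choose k * (t + 1 - k) ^ k ≤ t.choose k * n ^ k := by
  have h := Nat.mul_le_mul (Nat.pow_sub_le_descFactorial t k) (Nat.descFactorial_le_pow n k)
  rw [Nat.descFactorial_eq_factorial_mul_choose, Nat.descFactorial_eq_factorial_mul_choose] at h
  refine Nat.le_of_mul_le_mul_left ?_ k.factorial_pos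
  calc k.factorial * (n.choose k * (t + 1 - k) ^ k)
      = (t + 1 - k) ^ k * (k.factorial * n.choose k) := by ring
    _ ≤ k.factorial * t.choose k * n ^ k := h
    _ = k.factorial * (t.choose k * n ^ k) := by ring

lemma ConvexOn.map_sum_div_card_le {ι : Type*} [Fintype ι] [Nonempty ι] {f : ℝ → ℝ}
    (hf : ConvexOn ℝ Set.univ f) (x : ι → ℝ) :
    f ((∑ i, x i) / Fintype.card ι) ≤ (∑ i, f (x i)) / Fintype.card ι := by
  have hN : (0 : ℝ) < Fintype.card ι := by exact_mod_cast Fintype.card_pos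
  have := hf.map_sum_le (t := univ) (w := fun _ => (Fintype.card ι : ℝ)⁻¹) (p := x)
    (fun _ _ => by positivity) (by simp [card_univ, hN.ne']) (fun _ _ => Set.mem_univ _)
  simpa only [smul_eq_mul, ← mul_sum, div_eq_inv_mul] using this

lemma ConvexOn.iterate {f : ℝ → ℝ} (hf : ConvexOn ℝ Set.univ f) (hmono : Monotone f) :
    ∀ D, ConvexOn ℝ Set.univ f^[D]
  | 0 => convexOn_id convex_univ
  | D + 1 => by
    refine ⟨convex_univ, fun x _ y _ a b ha hb hab => ?_⟩
    simp only [Function.iterate_succ', Function.comp_apply, smul_eq_mul]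
    calc f (f^[D] (a * x + b * y)) ≤ f (a * f^[D] x + b * f^[D] y) :=
          hmono (by simpa using (hf.iterate hmono D).2 trivial trivial ha hb hab)
      _ ≤ a * f (f^[D] x) + b * f (f^[D] y) := by simpa using hf.2 trivial trivial ha hb hab

lemma card_filter_cons {β : Type*} [Fintype β] {D : ℕ} (P : (Fin (D + 1) → β) → Prop)
    [DecidablePred P] :
    #(univ.filter P) = ∑ b, #(univ.filter fun v => P (Fin.cons b v)) := by
  simp only [card_filter]
  rw [← (Fin.consEquiv fun _ => β).sum_comp, Fintype.sum_prod_type]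
  rfl

section Tensorization

variable {α γ : Type*} [Fintype α] [Fintype γ] (L : γ → Finset α)

def fullTuples {D : ℕ} (T : Finset (Fin D → α)) : Finset (Fin D → γ) :=
  univ.filter fun d => Fintype.piFinset (fun i => L (d i)) ⊆ T

variable {L}

section Step

variable {D : ℕ} (T : Finset (Fin (D + 1) → α))

def headSlice (u : Fin D → α) : Finset α := univ.filter fun a => Fin.cons a u ∈ T

variable (L) in
def commonTails (c : γ) : Finset (Fin D → α) := univ.filter fun u => L c ⊆ headSlice T u

lemma card_eq_sum_card_headSlice : #T = ∑ u, #(headSlice T u) := by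
  rw [show #T = #(univ.filter (· ∈ T)) by simp, card_filter_cons]
  exact sum_card_bipartiteAbove_eq_sum_card_bipartiteBelow (r := fun a u => Fin.cons a u ∈ T)

lemma cons_mem_fullTuples_iff {c : γ} {d : Fin D → γ} :
    Fin.cons c d ∈ fullTuples L T ↔
      d ∈ fullTuples L (commonTails L T c) := by
  simp only [fullTuples, commonTails, headSlice, mem_filter, mem_univ, true_and, subset_iff,
    Fintype.mem_piFinset, Fin.forall_fin_succ_pi, Fin.forall_fin_succ, Fin.cons_zero,
    Fin.cons_succ]
  exact ⟨fun h u hu a ha => h a u ⟨ha, hu⟩, fun h a u hau => h hau.2 hau.1⟩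

lemma card_fullTuples_succ :
    #(fullTuples L T) = ∑ c, #(fullTuples L (commonTails L T c)) := by
  rw [show #(fullTuples L T) = #(univ.filter (· ∈ fullTuples L T)) by simp, card_filter_cons]
  simp only [cons_mem_fullTuples_iff, filter_mem_eq_inter, univ_inter]

lemma apply_card_div_pow_succ_le [Nonempty α] {φ : ℝ → ℝ} (hconv : ConvexOn ℝ Set.univ φ)
    (hφ : ∀ S : Finset α,
      φ (#S / Fintype.card α) ≤ #(univ.filter fun c => L c ⊆ S) / Fintype.card γ) :
    φ (#T / Fintype.card α ^ (D + 1)) ≤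
      (∑ c, #(commonTails L T c) / (Fintype.card α : ℝ) ^ D)
        / Fintype.card γ := by
  have hcard : (Fintype.card (Fin D → α) : ℝ) = (Fintype.card α : ℝ) ^ D := by simp
  have hT : (#T : ℝ) = ∑ u, (#(headSlice T u) : ℝ) := by
    exact_mod_cast card_eq_sum_card_headSlice T
  have hswap : (∑ c, (#(commonTails L T c) : ℝ)) =
      ∑ u, (#(univ.filter fun c => L c ⊆ headSlice T u) : ℝ) := by
    exact_mod_cast sum_card_bipartiteAbove_eq_sum_card_bipartiteBelow
      (r := fun c u => L c ⊆ headSlice T u)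
  calc φ (#T / Fintype.card α ^ (D + 1))
      = φ ((∑ u, (#(headSlice T u) : ℝ) / Fintype.card α) / Fintype.card (Fin D → α)) := by
        rw [hT, hcard, ← sum_div, div_div, pow_succ']
    _ ≤ (∑ u, φ (#(headSlice T u) / Fintype.card α)) / Fintype.card (Fin D → α) :=
        hconv.map_sum_div_card_le _
    _ ≤ (∑ u, (#(univ.filter fun c => L c ⊆ headSlice T u) : ℝ) / Fintype.card γ)
          / Fintype.card (Fin D → α) := by
        gcongr with u
        exact hφ _
    _ = _ := by
        rw [← sum_div, ← sum_div, hswap, hcard, div_div, div_div, mul_comm]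

end Step

theorem iterate_le_card_fullTuples_div [Nonempty α] [Nonempty γ] {φ : ℝ → ℝ}
    (hmono : Monotone φ) (hconv : ConvexOn ℝ Set.univ φ)
    (hφ : ∀ S : Finset α,
      φ (#S / Fintype.card α) ≤ #(univ.filter fun c => L c ⊆ S) / Fintype.card γ) :
    ∀ (D : ℕ) (T : Finset (Fin D → α)),
      φ^[D] (#T / Fintype.card α ^ D) ≤ #(fullTuples L T) / Fintype.card γ ^ D
  | 0, T => by
    simp only [Function.iterate_zero, id, pow_zero, div_one, Nat.cast_le]
    refine card_le_card_of_injOn (fun _ => Fin.elim0) (fun u hu => ?_)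
      (fun _ _ _ _ _ => Subsingleton.elim _ _)
    simp only [fullTuples, coe_filter, mem_univ, true_and]
    exact fun v _ => Subsingleton.elim u v ▸ hu
  | D + 1, T => by
    have ih := iterate_le_card_fullTuples_div hmono hconv hφ D
    rw [Function.iterate_succ_apply]
    calc φ^[D] (φ (#T / Fintype.card α ^ (D + 1)))
        ≤ φ^[D] ((∑ c, #(commonTails L T c) /
            (Fintype.card α : ℝ) ^ D) / Fintype.card γ) :=
          hmono.iterate D (apply_card_div_pow_succ_le T hconv hφ)
      _ ≤ (∑ c, φ^[D] (#(commonTails L T c) /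
            (Fintype.card α : ℝ) ^ D)) / Fintype.card γ :=
          (hconv.iterate hmono D).map_sum_div_card_le _
      _ ≤ (∑ c, (#(fullTuples L (commonTails L T c)) : ℝ) /
            Fintype.card γ ^ D) / Fintype.card γ := by
          gcongr with c
          exact ih _
      _ = #(fullTuples L T) / Fintype.card γ ^ (D + 1) := by
          rw [card_fullTuples_succ, ← sum_div, div_div, pow_succ]
          push_cast
          rfl

end Tensorization

lemma card_filter_comp_mem_le {κ ι γ : Type*} [Fintype κ] [Fintype ι] [DecidableEq ι]
    [Fintype γ] (e : κ ↪ ι) (P : Finset (κ → γ)) :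
    #(univ.filter fun c : ι → γ => c ∘ e ∈ P) ≤
      #P * Fintype.card γ ^ (Fintype.card ι - Fintype.card κ) := by
  have hcompl : Fintype.card {i // i ∉ Set.range e} = Fintype.card ι - Fintype.card κ := by
    rw [Fintype.card_subtype_compl, ← Set.card_range_of_injective e.injective]
  calc #(univ.filter fun c : ι → γ => c ∘ e ∈ P)
      ≤ #(P ×ˢ (univ : Finset ({i // i ∉ Set.range e} → γ))) := by
        refine card_le_card_of_injOn (fun c => (c ∘ e, fun i => c i))
          (fun c hc => mem_product.2 ⟨(mem_filter.1 hc).2, mem_univ _⟩) fun c _ c' _ h => ?_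
        obtain ⟨h₁, h₂⟩ := Prod.mk.inj h
        funext i
        by_cases hi : i ∈ Set.range e
        · obtain ⟨j, rfl⟩ := hi
          exact congrFun h₁ j
        · exact congrFun h₂ ⟨i, hi⟩
    _ = #P * Fintype.card γ ^ (Fintype.card ι - Fintype.card κ) := by
        rw [card_product, card_univ, Fintype.card_fun, hcompl]

lemma card_filter_forall_curry_mem {γ : Type*} [Fintype γ] (s : ℕ) {D : ℕ}
    (Q : Finset (Fin D → γ)) :
    #(univ.filter fun g : Fin s × Fin D → γ => ∀ j, (fun i => g (j, i)) ∈ Q) = #Q ^ s := by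
  rw [← Fintype.card_piFinset_const]
  refine card_nbij' Function.curry Function.uncurry
    (fun g hg => Fintype.mem_piFinset.2 fun j => (mem_filter.1 hg).2 j)
    (fun g hg => mem_filter.2 ⟨mem_univ _, fun j => Fintype.mem_piFinset.1 hg j⟩)
    (fun g _ => Function.uncurry_curry g) (fun g _ => Function.curry_uncurry g)

def block {γ : Type*} {s D m : ℕ} (hm : s * D ≤ m) (c : Fin m → γ) (j : Fin s) :
    Fin D → γ :=
  fun i => c (Fin.castLE hm (finProdFinEquiv (j, i)))

lemma card_filter_forall_block_mem_le {γ : Type*} [Fintype γ] {s D m : ℕ} (hm : s * D ≤ m)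
    (Q : Finset (Fin D → γ)) :
    #(univ.filter fun c : Fin m → γ => ∀ j, block hm c j ∈ Q) ≤
      #Q ^ s * Fintype.card γ ^ (m - s * D) := by
  have h := card_filter_comp_mem_le (finProdFinEquiv.toEmbedding.trans (Fin.castLEEmb hm))
    (univ.filter fun g : Fin s × Fin D → γ => ∀ j, (fun i => g (j, i)) ∈ Q)
  rw [card_filter_forall_curry_mem, Fintype.card_prod, Fintype.card_fin, Fintype.card_fin,
    Fintype.card_fin] at h
  refine le_trans (card_le_card fun c hc => ?_) h
  exact mem_filter.2 ⟨mem_univ _, mem_filter.2 ⟨mem_univ _, (mem_filter.1 hc).2⟩⟩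

/-- A set of literals of density `x` touches `t ≥ x n` variables, and a uniform `k`-clause has all
its literals in it with probability at least `C(t, k) / (C(n, k) 2 ^ k) ≥ beta n k x`. -/
def beta (n k : ℕ) (x : ℝ) : ℝ := max (x - k / n) 0 ^ k / 2 ^ k

section beta

variable {n k : ℕ}

lemma beta_nonneg {x : ℝ} : 0 ≤ beta n k x := by
  unfold beta
  positivity

lemma monotone_beta : Monotone (beta n k) := fun x y h => by
  unfold beta
  gcongr

lemma convexOn_beta : ConvexOn ℝ Set.univ (beta n k) := by
  have h : ConvexOn ℝ Set.univ fun x : ℝ => max (x - k / n) 0 :=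
    ((convexOn_id convex_univ).sub (concaveOn_const _ convex_univ)).sup
      (convexOn_const 0 convex_univ)
  exact (h.pow (fun x _ => le_max_right _ _) k).smul (c := (2 ^ k)⁻¹) (by positivity) |>.congr
    fun x _ => by simp [beta, div_eq_inv_mul]

lemma pow_div_four_le_beta {x : ℝ} (hx : 2 * k / n ≤ x) : (x / 4) ^ k ≤ beta n k x := by
  have hk : 0 ≤ (k : ℝ) / n := by positivity
  rw [mul_div_assoc] at hx
  calc (x / 4) ^ k = (x / 2) ^ k / 2 ^ k := by rw [← div_pow]; ring_nf
    _ ≤ beta n k x := by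
      unfold beta
      gcongr
      · linarith
      · exact le_max_of_le_left (by linarith)

lemma beta_mul_choose_le (hn : 0 < n) {t : ℕ} {x : ℝ} (hx : x ≤ t / n) :
    beta n k x * (n.choose k * 2 ^ k) ≤ t.choose k := by
  have hnR : (0 : ℝ) < n := by exact_mod_cast hn
  have htk : (t : ℝ) - k ≤ ((t + 1 - k : ℕ) : ℝ) := by
    rcases le_total k (t + 1) with h | h
    · rw [Nat.cast_sub h]
      push_cast
      linarith
    · rw [Nat.sub_eq_zero_of_le h, Nat.cast_zero]
      linarith [(by exact_mod_cast h : (t : ℝ) + 1 ≤ k)]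
  have hmax : max (x - k / n) 0 ≤ ((t + 1 - k : ℕ) : ℝ) / n := by
    refine max_le ?_ (by positivity)
    calc x - k / n ≤ (t - k) / n := by rw [sub_div]; linarith
      _ ≤ _ := by gcongr
  have hchoose :
      (n.choose k : ℝ) * ((t + 1 - k : ℕ) : ℝ) ^ k ≤ t.choose k * (n : ℝ) ^ k := by
    exact_mod_cast Nat.choose_mul_pow_sub_le n t k
  calc beta n k x * (n.choose k * 2 ^ k)
      ≤ (((t + 1 - k : ℕ) : ℝ) / n) ^ k / 2 ^ k * (n.choose k * 2 ^ k) := by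
        unfold beta
        gcongr
    _ = (n.choose k : ℝ) * ((t + 1 - k : ℕ) : ℝ) ^ k / (n : ℝ) ^ k := by
        rw [div_pow]
        field_simp
    _ ≤ t.choose k := by
        rw [div_le_iff₀ (by positivity)]
        exact hchoose

end beta

lemma iterate_pow_div_four_le_iterate_beta {n k D : ℕ} {e x : ℝ} (hx : e ≤ x)
    (hsmall : ∀ j ∈ Set.Iio D, 2 * k / n ≤ (fun z : ℝ => (z / 4) ^ k)^[j] e) :
    (fun z : ℝ => (z / 4) ^ k)^[D] e ≤ (beta n k)^[D] x := by
  induction D with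
  | zero => exact hx
  | succ D ih =>
    rw [Function.iterate_succ_apply', Function.iterate_succ_apply']
    exact (pow_div_four_le_beta (hsmall D (Nat.lt_succ_self D))).trans
      (monotone_beta (ih fun j hj => hsmall j (Nat.lt_succ_of_lt hj)))

section Probability

lemma card_div_card_pow_le_one {β : Type*} [Fintype β] {m : ℕ} (s : Finset (Fin m → β)) :
    (#s : ℝ) / Fintype.card β ^ m ≤ 1 :=
  div_le_one_of_le₀ (by exact_mod_cast (card_le_univ s).trans_eq (by simp)) (by positivity)

variable {n : ℕ} (f : (Fin n → Bool) → Bool)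

def zfLt {j m : ℕ} (y : ℝ) : Finset (Fin m → Clause n j) :=
  univ.filter fun c => (Zf f c : ℝ) < y

lemma Pf_eq_card_div {j m : ℕ} (y : ℝ) :
    Pf n j m f y =
      #(zfLt f y : Finset (Fin m → Clause n j)) / (Fintype.card (Clause n j) : ℝ) ^ m := by
  rw [Pf, sum_boole, zfLt]

lemma Pf_nonneg (j m : ℕ) (y : ℝ) : 0 ≤ Pf n j m f y := by
  rw [Pf_eq_card_div]
  positivity

lemma Pf_le_one (j m : ℕ) (y : ℝ) : Pf n j m f y ≤ 1 := by
  rw [Pf_eq_card_div]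
  exact card_div_card_pow_le_one _

lemma Pf_eq_one_sub {j m : ℕ} (hj : 0 < Fintype.card (Clause n j)) (y : ℝ) :
    Pf n j m f y =
      1 - #(zfLt f y : Finset (Fin m → Clause n j))ᶜ / (Fintype.card (Clause n j) : ℝ) ^ m := by
  have hK : (0 : ℝ) < (Fintype.card (Clause n j) : ℝ) ^ m := by positivity
  rw [Pf_eq_card_div, card_compl, Nat.cast_sub (card_le_univ _), sub_div, Fintype.card_fun,
    Fintype.card_fin, Nat.cast_pow, div_self hK.ne']
  ring

end Probability

namespace Clause

variable {n k : ℕ}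

def vars (c : Clause n k) : Finset (Fin n) := c.1.image Prod.fst

def posVars (c : Clause n k) : Finset (Fin n) := c.vars.filter fun v => (v, true) ∈ c.1

lemma card_vars (c : Clause n k) : #c.vars = k := c.2.2

lemma eq_of_mem_of_mem {c : Clause n k} {v : Fin n} {b b' : Bool} (h : (v, b) ∈ c.1)
    (h' : (v, b') ∈ c.1) : b = b' :=
  congrArg Prod.snd (injOn_of_card_image_eq (c.2.2.trans c.2.1.symm) h h' rfl)

lemma mk_true_mem_iff {c : Clause n k} {v : Fin n} : (v, true) ∈ c.1 ↔ v ∈ c.posVars := by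
  simp only [posVars, vars, mem_filter, mem_image]
  exact ⟨fun h => ⟨⟨_, h, rfl⟩, h⟩, And.right⟩

lemma mk_false_mem_iff {c : Clause n k} {v : Fin n} :
    (v, false) ∈ c.1 ↔ v ∈ c.vars ∧ v ∉ c.posVars := by
  rw [← mk_true_mem_iff]
  refine ⟨fun h => ⟨mem_image_of_mem _ h, fun h' => Bool.noConfusion (eq_of_mem_of_mem h h')⟩,
    fun ⟨hv, hnt⟩ => ?_⟩
  obtain ⟨⟨w, b⟩, hb, rfl⟩ := mem_image.1 hv
  cases b
  · exact hb
  · exact absurd hb hnt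

lemma ext_vars_posVars {c c' : Clause n k} (hv : c.vars = c'.vars)
    (hp : c.posVars = c'.posVars) : c = c' := by
  refine Subtype.ext (Finset.ext fun ⟨v, b⟩ => ?_)
  cases b
  · rw [mk_false_mem_iff, mk_false_mem_iff, hv, hp]
  · rw [mk_true_mem_iff, mk_true_mem_iff, hp]

lemma card_le : Fintype.card (Clause n k) ≤ n.choose k * 2 ^ k :=
  calc Fintype.card (Clause n k)
      ≤ #((powersetCard k univ).sigma fun W : Finset (Fin n) => W.powerset) := by
        refine card_le_card_of_injOn (fun c => ⟨c.vars, c.posVars⟩) (fun c _ => ?_)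
          fun c _ c' _ h => ?_
        · exact mem_sigma.2 ⟨mem_powersetCard.2 ⟨subset_univ _, c.card_vars⟩,
            mem_powerset.2 (filter_subset _ _)⟩
        · simp only [Sigma.mk.injEq, heq_eq_eq] at h
          exact ext_vars_posVars h.1 h.2
    _ = n.choose k * 2 ^ k := by
      rw [card_sigma, sum_congr rfl fun W hW => by rw [card_powerset, (mem_powersetCard.1 hW).2],
        sum_const, card_powersetCard, card_univ, Fintype.card_fin, smul_eq_mul]

def ofVars (W : Finset (Fin n)) (hW : #W = k) (g : Fin n → Bool) : Clause n k :=
  ⟨W.image fun v => (v, g v), by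
    rwa [card_image_of_injective _ fun _ _ h => congrArg Prod.fst h], by
    rwa [image_image, Function.comp_def, image_id']⟩

lemma vars_ofVars (W : Finset (Fin n)) (hW : #W = k) (g : Fin n → Bool) :
    (ofVars W hW g).vars = W := by
  simp [vars, ofVars, image_image, Function.comp_def]

def unit (l : Fin n × Bool) : Clause n 1 := ⟨{l}, card_singleton l, by simp⟩

lemma unit_bijective : Function.Bijective (unit (n := n)) :=
  ⟨fun _ _ h => singleton_injective (congrArg Subtype.val h), fun u =>
    let ⟨l, hl⟩ := card_eq_one.1 u.2.1
    ⟨l, Subtype.ext hl.symm⟩⟩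

def unitEquiv : Fin n × Bool ≃ Clause n 1 := Equiv.ofBijective unit unit_bijective

lemma card_one : Fintype.card (Clause n 1) = 2 * n := by
  simp [← Fintype.card_congr (unitEquiv (n := n)), mul_comm]

lemma sat_unit {x : Fin n → Bool} {l : Fin n × Bool} : sat x (unit l) ↔ x l.1 = l.2 := by
  simp [sat, unit]

def units (c : Clause n k) : Finset (Clause n 1) := c.1.map unitEquiv.toEmbedding

lemma card_units (c : Clause n k) : #c.units = k := (card_map _).trans c.2.1

lemma units_subset_map_iff {c : Clause n k} {S : Finset (Fin n × Bool)} :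
    c.units ⊆ S.map unitEquiv.toEmbedding ↔ c.1 ⊆ S := map_subset_map

lemma mem_ofVars {W : Finset (Fin n)} {hW : #W = k} {g : Fin n → Bool} {l : Fin n × Bool} :
    l ∈ (ofVars W hW g).1 ↔ l.1 ∈ W ∧ l.2 = g l.1 := by
  obtain ⟨v, b⟩ := l
  simp [ofVars, eq_comm]

lemma choose_card_image_fst_le (S : Finset (Fin n × Bool)) :
    (#(S.image Prod.fst)).choose k ≤ #(univ.filter fun c : Clause n k => c.1 ⊆ S) := by
  set V := S.image Prod.fst
  set g : Fin n → Bool := fun v => decide ((v, true) ∈ S)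
  have hg : ∀ v ∈ V, (v, g v) ∈ S := by
    intro v hv
    obtain ⟨⟨w, b⟩, hb, rfl⟩ := mem_image.1 hv
    cases b <;> by_cases h : (w, true) ∈ S <;> simp_all [g]
  rw [← card_powersetCard]
  refine card_le_card_of_surjOn vars fun W hW => ?_
  obtain ⟨hWV, hW⟩ := mem_powersetCard.1 hW
  refine ⟨ofVars W hW g, mem_filter.2 ⟨mem_univ _, fun l hl => ?_⟩, vars_ofVars W hW g⟩
  obtain ⟨hl, hl'⟩ := mem_ofVars.1 hl
  rw [← Prod.mk.eta (p := l), hl']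
  exact hg _ (hWV hl)

lemma beta_mul_card_le_card_filter_subset (hn : 0 < n) (S : Finset (Fin n × Bool)) :
    beta n k (#S / (2 * n)) * Fintype.card (Clause n k)
      ≤ #(univ.filter fun c : Clause n k => c.1 ⊆ S) := by
  set t := #(S.image Prod.fst)
  have hS : #S ≤ t * 2 := by
    calc #S ≤ #(S.image Prod.fst ×ˢ (univ : Finset Bool)) :=
          card_le_card fun l hl => mem_product.2 ⟨mem_image_of_mem _ hl, mem_univ _⟩
      _ = t * 2 := by simp [t]
  have hx : (#S : ℝ) / (2 * n) ≤ t / n := by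
    rw [div_le_div_iff₀ (by positivity) (by positivity)]
    have : (#S : ℝ) ≤ t * 2 := by exact_mod_cast hS
    nlinarith [(Nat.cast_nonneg n : (0 : ℝ) ≤ n)]
  calc beta n k (#S / (2 * n)) * Fintype.card (Clause n k)
      ≤ beta n k (#S / (2 * n)) * (n.choose k * 2 ^ k) := by
        gcongr
        · exact beta_nonneg
        · exact_mod_cast card_le
    _ ≤ t.choose k := beta_mul_choose_le hn hx
    _ ≤ _ := by exact_mod_cast choose_card_image_fst_le S

variable (f : (Fin n → Bool) → Bool)

lemma Zf_le_Zf_comp {j m D : ℕ} (c : Fin m → Clause n j) (g : Fin D → Fin m) :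
    Zf f c ≤ Zf f (c ∘ g) :=
  card_le_card fun x hx => by
    simp only [mem_filter, mem_univ, true_and, Function.comp_apply] at hx ⊢
    exact ⟨hx.1, fun a => hx.2 (g a)⟩

lemma Zf_le_sum_units {D : ℕ} (d : Fin D → Clause n k) :
    Zf f d ≤ ∑ u ∈ Fintype.piFinset (fun i => (d i).units), Zf f u := by
  refine (card_le_card fun x hx => ?_).trans card_biUnion_le
  simp only [mem_filter, mem_univ, true_and] at hx
  choose l hl hxl using hx.2
  refine mem_biUnion.2 ⟨fun i => unit (l i),
    Fintype.mem_piFinset.2 fun i => mem_map_of_mem unitEquiv.toEmbedding (hl i), ?_⟩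
  simp only [mem_filter, mem_univ, true_and]
  exact ⟨hx.1, fun i => sat_unit.2 (hxl i)⟩

lemma not_mem_fullTuples_of_le_Zf (hk : 0 < k) {D : ℕ} {y : ℝ} {d : Fin D → Clause n k}
    (hd : (k : ℝ) ^ D * y ≤ Zf f d) :
    d ∉ fullTuples units (zfLt f y : Finset (Fin D → Clause n 1)) := by
  intro hfull
  set P := Fintype.piFinset fun i => (d i).units
  have hP : #P = k ^ D := by simp [P, card_units]
  have hlt : ∑ u ∈ P, (Zf f u : ℝ) < ∑ _u ∈ P, y :=
    sum_lt_sum_of_nonempty (Finset.card_pos.1 (hP ▸ pow_pos hk D)) fun u hu =>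
      (mem_filter.1 ((mem_filter.1 hfull).2 hu)).2
  have hle : (Zf f d : ℝ) ≤ ∑ u ∈ P, (Zf f u : ℝ) := by exact_mod_cast Zf_le_sum_units f d
  rw [sum_const, hP, nsmul_eq_mul] at hlt
  push_cast at hlt
  linarith

end Clause


namespace Clause

variable {n k : ℕ} (f : (Fin n → Bool) → Bool)

lemma beta_card_div_le (hn : 0 < n) (hkn : k ≤ n) (S : Finset (Clause n 1)) :
    beta n k (#S / Fintype.card (Clause n 1)) ≤
      #(univ.filter fun c : Clause n k => c.units ⊆ S) / Fintype.card (Clause n k) := by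
  obtain ⟨S, rfl⟩ : ∃ S' : Finset (Fin n × Bool), S = S'.map unitEquiv.toEmbedding :=
    ⟨S.map unitEquiv.symm.toEmbedding, by simp [Finset.map_map]⟩
  simp only [card_map, card_one, units_subset_map_iff]
  rw [le_div_iff₀ (by exact_mod_cast card_pos hkn)]
  push_cast
  exact beta_mul_card_le_card_filter_subset hn S

lemma iterate_beta_Pf_le (hn : 0 < n) (hkn : k ≤ n) (D : ℕ) (y : ℝ) :
    (beta n k)^[D] (Pf n 1 D f y) ≤
      #(fullTuples (units (k := k)) (zfLt f y : Finset (Fin D → Clause n 1))) /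
        (Fintype.card (Clause n k) : ℝ) ^ D := by
  have : Nonempty (Clause n 1) := Fintype.card_pos_iff.1 (card_pos hn)
  have : Nonempty (Clause n k) := Fintype.card_pos_iff.1 (card_pos hkn)
  rw [Pf_eq_card_div]
  exact iterate_le_card_fullTuples_div monotone_beta convexOn_beta (beta_card_div_le hn hkn) D _

lemma card_compl_zfLt_div_le (hk : 0 < k) (hkn : k ≤ n) {D m s : ℕ} (hm : s * D ≤ m)
    (y : ℝ) :
    #(zfLt f ((k : ℝ) ^ D * y) : Finset (Fin m → Clause n k))ᶜ /
        (Fintype.card (Clause n k) : ℝ) ^ m ≤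
      (1 - #(fullTuples (units (k := k)) (zfLt f y : Finset (Fin D → Clause n 1))) /
        (Fintype.card (Clause n k) : ℝ) ^ D) ^ s := by
  set F := fullTuples (units (k := k)) (zfLt f y : Finset (Fin D → Clause n 1))
  set K := Fintype.card (Clause n k)
  have hK : (0 : ℝ) < K := by exact_mod_cast card_pos hkn
  have hE : #(zfLt f ((k : ℝ) ^ D * y) : Finset (Fin m → Clause n k))ᶜ ≤
      #Fᶜ ^ s * K ^ (m - s * D) := by
    refine le_trans (card_le_card fun c hc => ?_) (card_filter_forall_block_mem_le hm Fᶜ)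
    simp only [zfLt, compl_filter, mem_filter, mem_univ, true_and, not_lt, mem_compl] at hc ⊢
    exact fun j => not_mem_fullTuples_of_le_Zf f hk
      (hc.trans (by exact_mod_cast Zf_le_Zf_comp f c _))
  have hKm : (K : ℝ) ^ m = ((K : ℝ) ^ D) ^ s * (K : ℝ) ^ (m - s * D) := by
    rw [← pow_mul, ← pow_add, mul_comm D s, Nat.add_sub_cancel' hm]
  calc (#(zfLt f ((k : ℝ) ^ D * y) : Finset (Fin m → Clause n k))ᶜ : ℝ) / K ^ m
      ≤ (#Fᶜ : ℝ) ^ s * (K : ℝ) ^ (m - s * D) / K ^ m := by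
        gcongr
        exact_mod_cast hE
    _ = ((#Fᶜ : ℝ) / K ^ D) ^ s := by
        rw [hKm, div_pow]
        field_simp
    _ = _ := by
        rw [card_compl, Nat.cast_sub (card_le_univ _), sub_div, Fintype.card_fun,
          Fintype.card_fin, Nat.cast_pow, div_self (by positivity)]

theorem one_sub_pow_le_Pf (hk : 0 < k) (hkn : k ≤ n) {D m s : ℕ} (hm : s * D ≤ m) (y : ℝ)
    {δ : ℝ} (hδ : δ ≤ (beta n k)^[D] (Pf n 1 D f y)) :
    1 - (1 - δ) ^ s ≤ Pf n k m f ((k : ℝ) ^ D * y) := by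
  have hρ := hδ.trans (iterate_beta_Pf_le f (hk.trans_le hkn) hkn D y)
  have hpow := pow_le_pow_left₀ (sub_nonneg.2 (card_div_card_pow_le_one _))
    (sub_le_sub_left hρ 1) s
  rw [Pf_eq_one_sub f (card_pos hkn)]
  linarith [card_compl_zfLt_div_le f hk hkn hm y]

end Clause

theorem unit_clauses_vs_k_clauses_general (k : ℕ) (hk : 2 ≤ k) (D : ℕ) (y : ℝ)
    (h : ℕ → ℕ) (hub : Tendsto h atTop atTop)
    (ε : ℝ) (hε : 0 < ε) :
    ∀ᶠ (n : ℕ) in atTop, ∀ f : (Fin n → Bool) → Bool,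
      Pf n 1 D f y ≤ Pf n k (h n) f ((k : ℝ) ^ D * y) + ε := by
  have hpos : ∀ j, 0 < (fun z : ℝ => (z / 4) ^ k)^[j] ε := fun j => by
    induction j with
    | zero => exact hε
    | succ j ih => rw [Function.iterate_succ_apply']; positivity
  obtain ⟨s, hs⟩ := exists_pow_lt_of_lt_one hε (sub_lt_self 1 (hpos D))
  have hsmall : ∀ᶠ n : ℕ in atTop, ∀ j ∈ Set.Iio D,
      2 * k / n ≤ (fun z : ℝ => (z / 4) ^ k)^[j] ε :=
    (eventually_all_finite (Set.finite_Iio D)).2 fun j _ =>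
      (tendsto_const_div_atTop_nhds_zero_nat _).eventually_le_const (hpos j)
  filter_upwards [eventually_ge_atTop k, hub.eventually_ge_atTop (s * D), hsmall]
    with n hkn hsD hsmall f
  by_cases hP : Pf n 1 D f y ≤ ε
  · linarith [Pf_nonneg f k (h n) ((k : ℝ) ^ D * y)]
  · have hδ := iterate_pow_div_four_le_iterate_beta (not_le.1 hP).le hsmall
    linarith [Clause.one_sub_pow_le_Pf f (by omega) hkn hsD y hδ, Pf_le_one f 1 D y]

/-- **Replacing `D` random unit clauses by many random `k`-clauses:**
for any unbounded increasing sequence `h(n)` and any `ε > 0`, for all `n` large enough and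
any Boolean formula `f` on `n` variables,
`ℙ{Z(f ∧ C₁⁽¹⁾ ∧ … ∧ C_D⁽¹⁾) < y} ≤ ℙ{Z(f ∧ C₁⁽ᵏ⁾ ∧ … ∧ C_{h(n)}⁽ᵏ⁾) < k^D y} + ε`. -/
theorem unit_clauses_vs_k_clauses (k : ℕ) (hk : 2 ≤ k) (D : ℕ) (hD : 1 ≤ D) (y : ℝ)
    (h : ℕ → ℕ) (hmono : Monotone h) (hub : Tendsto h atTop atTop)
    (ε : ℝ) (hε : 0 < ε) :
    ∀ᶠ (n : ℕ) in atTop, ∀ f : (Fin n → Bool) → Bool,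
      Pf n 1 D f y ≤ Pf n k (h n) f ((k : ℝ) ^ D * y) + ε :=
  unit_clauses_vs_k_clauses_general k hk D y h hub ε hε
end
end
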